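/- Let N, K, m be natural numbers with 0 < K < N, 0 < m, and m ≤ N − K. Then every complex root of the polynomial g(z) = Σ_{d=0}^{m} C(K,d)·C(N−K,m−d)·z^d (the probability generating function of Hypergeometric(N,K,m) multiplied by C(N,m)) is a strictly negative real number. -/

import Mathlib

open Filter Finset MeasureTheory

noncomputable section

/-- A graph on `Fin n` is identified with its edge set. -/
abbrev EdgeSet (n : ℕ) := Finset (Sym2 (Fin n))

/-- The non-diagonal (loopless) potential edges on `Fin n`. -/
def potEdges (n : ℕ) : Finset (Sym2 (Fin n)) :=
  Finset.univ.filter (fun e => ¬ e.IsDiag)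

/-- Graphs on `Fin n` with exactly `m` edges. -/
def nullGraphs (n m : ℕ) : Finset (EdgeSet n) :=
  (potEdges n).powersetCard m

/-- `N = n(n-1)/2`, the number of potential edges. -/
def bigN (n : ℕ) : ℕ := n * (n - 1) / 2

open Classical in
/-- Null model `P0 = G(n,m)`: the uniform distribution over graphs with `m` edges. -/
def P0 (n m : ℕ) (A : Set (EdgeSet n)) : ℝ :=
  (((nullGraphs n m).filter (fun G => G ∈ A)).card : ℝ) / ((nullGraphs n m).card : ℝ)

/-- Potential edges incident to a vertex `v`. -/
def incEdges (n : ℕ) (v : Fin n) : Finset (Sym2 (Fin n)) :=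
  (potEdges n).filter (fun e => v ∈ e)

/-- Normalizing constant `n·C(n-1,k)·C(N-k,m-k)` of the planted model. -/
def plantedDenom (n m k : ℕ) : ℝ :=
  (n : ℝ) * (Nat.choose (n - 1) k : ℝ) * (Nat.choose (bigN n - k) (m - k) : ℝ)

open Classical in
/-- Joint planted model over triples (hub `v`, star `S`, graph `S ∪ H`): the hub is
uniform, the star is a uniform `k`-set of edges incident to the hub, and `H` is a
uniform `(m-k)`-set of the remaining potential edges. -/
def P1full (n m k : ℕ) (A : Set (Fin n × EdgeSet n × EdgeSet n)) : ℝ :=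
  (∑ v : Fin n, ∑ S ∈ (incEdges n v).powersetCard k,
      ∑ H ∈ (potEdges n \ S).powersetCard (m - k),
        if (v, S, S ∪ H) ∈ A then (1 : ℝ) else 0) / plantedDenom n m k

/-- Planted model `P1(n,m,k)`: the marginal distribution of the graph. -/
def P1 (n m k : ℕ) (A : Set (EdgeSet n)) : ℝ :=
  P1full n m k {t | t.2.2 ∈ A}

open Classical in
/-- Expectation under the joint planted model. -/
def E1full (n m k : ℕ) (f : Fin n × EdgeSet n × EdgeSet n → ℝ) : ℝ :=
  (∑ v : Fin n, ∑ S ∈ (incEdges n v).powersetCard k,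
      ∑ H ∈ (potEdges n \ S).powersetCard (m - k), f (v, S, S ∪ H)) / plantedDenom n m k

open Classical in
/-- Degree of vertex `v` in the graph `G`. -/
def deg {n : ℕ} (G : EdgeSet n) (v : Fin n) : ℕ :=
  (G.filter (fun e => v ∈ e)).card

/-- Maximum degree of the graph `G`. -/
def maxDeg {n : ℕ} (G : EdgeSet n) : ℕ :=
  Finset.univ.sup (fun v => deg G v)

/-- Likelihood ratio `Λ(G) = [C(N,m)/(n·C(n-1,k)·C(N-k,m-k))]·Σ_i C(d_i,k)`. -/
def LR (n m k : ℕ) (G : EdgeSet n) : ℝ :=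
  ((Nat.choose (bigN n) m : ℝ) / plantedDenom n m k) *
    ∑ i : Fin n, (Nat.choose (deg G i) k : ℝ)

/-- Threshold `t* = 2m/n + √((2m/n)(1-m/N))·√(2 log n - (1/α) log log n)`. -/
def tstar (α : ℝ) (n m : ℕ) : ℝ :=
  2 * (m : ℝ) / (n : ℝ) +
    Real.sqrt (2 * (m : ℝ) / (n : ℝ) * (1 - (m : ℝ) / (bigN n : ℝ))) *
      Real.sqrt (2 * Real.log n - (1 / α) * Real.log (Real.log n))

/-- The standard normal cumulative distribution function `Φ`. -/
def Phi (x : ℝ) : ℝ :=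
  ∫ t in Set.Iic x, Real.exp (-t ^ 2 / 2) / Real.sqrt (2 * Real.pi)

/-- Total variation distance between two set functions on graphs. -/
def TVdist (n : ℕ) (P Q : Set (EdgeSet n) → ℝ) : ℝ :=
  ⨆ A : Set (EdgeSet n), |P A - Q A|

/-- Null mean degree `μ = (n-1)·(m/N)`. -/
def muN (n m : ℕ) : ℝ := ((n : ℝ) - 1) * ((m : ℝ) / (bigN n : ℝ))

/-- Null degree variance `σ² = (n-1)p(1-p)·(N/(N-1))·((N-(n-1))/(N-1))` with `p = m/N`. -/
def sigSqN (n m : ℕ) : ℝ :=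
  ((n : ℝ) - 1) * ((m : ℝ) / (bigN n : ℝ)) * (1 - (m : ℝ) / (bigN n : ℝ)) *
    ((bigN n : ℝ) / ((bigN n : ℝ) - 1)) *
      (((bigN n : ℝ) - ((n : ℝ) - 1)) / ((bigN n : ℝ) - 1))

/-- Null degree standard deviation `σ`. -/
def sigN (n m : ℕ) : ℝ := Real.sqrt (sigSqN n m)

/-- `a_n = kσ/μ`. -/
def aN (n m k : ℕ) : ℝ := (k : ℝ) * sigN n m / muN n m

/-- Hypergeometric(N,K,m) probability mass function. -/
def hpmf (N K m d : ℕ) : ℝ :=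
  ((Nat.choose K d : ℝ) * (Nat.choose (N - K) (m - d) : ℝ)) / (Nat.choose N m : ℝ)

/-- Mean of the Hypergeometric(N,K,m) distribution. -/
def hMean (N K m : ℕ) : ℝ := ∑ d ∈ Finset.range (m + 1), (d : ℝ) * hpmf N K m d

/-- Variance of the Hypergeometric(N,K,m) distribution. -/
def hVar (N K m : ℕ) : ℝ :=
  ∑ d ∈ Finset.range (m + 1), ((d : ℝ) - hMean N K m) ^ 2 * hpmf N K m d

/-- Moment generating function of the standardized hypergeometric `Y = (d-μ)/σ`. -/
def hMgfY (N K m : ℕ) (t : ℝ) : ℝ :=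
  ∑ d ∈ Finset.range (m + 1),
    hpmf N K m d * Real.exp (t * (((d : ℝ) - hMean N K m) / Real.sqrt (hVar N K m)))

/-- Cumulant generating function of the standardized hypergeometric. -/
def hCgfY (N K m : ℕ) (t : ℝ) : ℝ := Real.log (hMgfY N K m t)

open Classical in
/-- The Erdős–Rényi `G(n,p)` probability of an event. -/
def Pgnp (n : ℕ) (p : ℝ) (A : Set (EdgeSet n)) : ℝ :=
  ∑ G ∈ (potEdges n).powerset,
    (if G ∈ A then (1 : ℝ) else 0) * p ^ G.card * (1 - p) ^ ((potEdges n).card - G.card)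

open Classical in
/-- Leaves of the planted star with hub `v` and star edge set `S`. -/
def starLeaves {n : ℕ} (v : Fin n) (S : EdgeSet n) : Finset (Fin n) :=
  Finset.univ.filter (fun u => u ≠ v ∧ s(u, v) ∈ S)

open Classical in
/-- Expectation under the null model `G(n,m)`. -/
def E0 (n m : ℕ) (f : EdgeSet n → ℝ) : ℝ :=
  (∑ G ∈ nullGraphs n m, f G) / ((nullGraphs n m).card : ℝ)

open Classical in
/-- Conditional expectation under the null model `G(n,m)` given an event `A`. -/
def E0cond (n m : ℕ) (f : EdgeSet n → ℝ) (A : Set (EdgeSet n)) : ℝ :=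
  (∑ G ∈ (nullGraphs n m).filter (fun G => G ∈ A), f G) /
    (((nullGraphs n m).filter (fun G => G ∈ A)).card : ℝ)

open Classical in
/-- Tail probability `Q^{(a)}(Y ≥ t)` of the exponentially tilted standardized
hypergeometric distribution. -/
def hTiltTailProb (N K m : ℕ) (a t : ℝ) : ℝ :=
  (∑ d ∈ Finset.range (m + 1),
      (if t ≤ ((d : ℝ) - hMean N K m) / Real.sqrt (hVar N K m) then (1 : ℝ) else 0) *
        (hpmf N K m d *
          Real.exp (a * (((d : ℝ) - hMean N K m) / Real.sqrt (hVar N K m))))) /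
    hMgfY N K m a

/-!
Write `M = N - K` and `P = X ^ M * (X + 1) ^ K`. The Leibniz rule gives
`P⁽ᵐ⁾(x) = m! (x + 1) ^ (M + K - m) z ^ (M - m) g(z)` whenever `x = z (x + 1)`,
i.e. `z = x / (x + 1)`.
By Gauss–Lucas the roots of `P⁽ᵐ⁾` lie in the convex hull `[-1, 0]` of the roots of `P`.
Since `g(0), g(1) > 0`, a root `z` of `g` yields the root `x = z / (1 - z)` of `P⁽ᵐ⁾`, which
avoids both endpoints, and `x ↦ x / (x + 1)` maps the open segment `(-1, 0)` onto the negative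
reals.
-/

open Polynomial
open scoped Nat

theorem Nat.choose_mul_descFactorial_mul_descFactorial {m d : ℕ} (hd : d ≤ m) (M K : ℕ) :
    m.choose d * (M.descFactorial (m - d) * K.descFactorial d) =
      m ! * (K.choose d * M.choose (m - d)) := by
  rw [Nat.descFactorial_eq_factorial_mul_choose, Nat.descFactorial_eq_factorial_mul_choose,
    ← Nat.choose_mul_factorial_mul_factorial hd]
  ring

namespace Polynomial

theorem iterate_derivative_ne_zero {R : Type*} [Semiring R] [Module.IsTorsionFree ℕ R]
    {p : R[X]} (hp : p ≠ 0) {k : ℕ} (hk : k ≤ p.natDegree) : derivative^[k] p ≠ 0 := by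
  intro h
  have hcoeff := congrArg (coeff · (p.natDegree - k)) h
  simp only [coeff_iterate_derivative, Nat.sub_add_cancel hk, coeff_zero] at hcoeff
  rcases smul_eq_zero.mp hcoeff with h | h
  · exact (Nat.descFactorial_eq_zero_iff_lt.mp h).not_ge hk
  · exact hp (leadingCoeff_eq_zero.mp h)

section CommRing

variable {R : Type*} [CommRing R]

theorem iterate_derivative_X_pow_mul_X_add_one_pow (M K m : ℕ) :
    derivative^[m] ((X : R[X]) ^ M * (X + 1) ^ K) =
      m ! • ∑ d ∈ range (m + 1),
        (K.choose d * M.choose (m - d)) • (X ^ (M - (m - d)) * (X + 1) ^ (K - d)) := by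
  have hX1 (j : ℕ) :
      derivative^[j] (((X : R[X]) + 1) ^ K) = K.descFactorial j • (X + 1) ^ (K - j) := by
    simpa using iterate_derivative_X_add_pow K j (1 : R)
  rw [iterate_derivative_mul, Finset.smul_sum]
  refine Finset.sum_congr rfl fun d hd => ?_
  have hdm : d ≤ m := Nat.lt_succ_iff.mp (Finset.mem_range.mp hd)
  rw [iterate_derivative_X_pow_eq_natCast_mul, hX1, smul_smul,
    ← Nat.choose_mul_descFactorial_mul_descFactorial hdm]
  simp only [nsmul_eq_mul, Nat.cast_mul]
  ring

theorem eval_iterate_derivative_X_pow_mul_X_add_one_pow {M m : ℕ} (hm : m ≤ M) (K : ℕ)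
    {x z : R} (hx : x = z * (x + 1)) :
    (derivative^[m] ((X : R[X]) ^ M * (X + 1) ^ K)).eval x =
      m ! * (x + 1) ^ (M + K - m) * z ^ (M - m) *
        ∑ d ∈ range (m + 1), ((K.choose d : R) * (M.choose (m - d) : R)) * z ^ d := by
  rw [iterate_derivative_X_pow_mul_X_add_one_pow, Finset.mul_sum]
  simp only [nsmul_eq_mul, Nat.cast_mul, eval_mul, eval_natCast, eval_finsetSum, eval_pow,
    eval_add, eval_X, eval_one, Finset.mul_sum]
  refine Finset.sum_congr rfl fun d hd => ?_
  have hdm : d ≤ m := Nat.lt_succ_iff.mp (Finset.mem_range.mp hd)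
  rcases le_or_gt d K with hdK | hKd
  · have hsplit : M + K - m = (M - (m - d)) + (K - d) := by omega
    have hpow : M - (m - d) = (M - m) + d := by omega
    have hxpow : x ^ (M - (m - d)) = z ^ (M - (m - d)) * (x + 1) ^ (M - (m - d)) := by
      rw [← mul_pow, ← hx]
    rw [hxpow, hsplit, pow_add, hpow, pow_add]
    ring
  · simp [Nat.choose_eq_zero_of_lt hKd]

end CommRing

theorem rootSet_iterate_derivative_subset_convexHull_rootSet (P : ℂ[X]) (n : ℕ) :
    (derivative^[n] P).rootSet ℂ ⊆ convexHull ℝ (P.rootSet ℂ) := by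
  induction n with
  | zero => exact subset_convexHull ℝ _
  | succ n ih =>
    rw [Function.iterate_succ_apply']
    rcases lt_or_ge 0 (derivative^[n] P).degree with hpos | hle
    · exact (rootSet_derivative_subset_convexHull_rootSet hpos).trans
        (convexHull_min ih (convex_convexHull ℝ _))
    · rw [eq_C_of_degree_le_zero hle, derivative_C, rootSet_zero]
      exact Set.empty_subset _

theorem rootSet_X_pow_mul_X_add_one_pow_subset (M K : ℕ) :
    ((X : ℂ[X]) ^ M * (X + 1) ^ K).rootSet ℂ ⊆ {-1, 0} := by
  intro x hx
  obtain ⟨-, hx⟩ := mem_rootSet.mp hx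
  simp only [map_mul, map_pow, map_add, aeval_X, map_one] at hx
  rcases mul_eq_zero.mp hx with h | h
  · exact Or.inr (eq_zero_of_pow_eq_zero h)
  · exact Or.inl (eq_neg_of_add_eq_zero_left (eq_zero_of_pow_eq_zero h))

end Polynomial

theorem Complex.im_eq_zero_and_re_neg_of_mem_openSegment {x z : ℂ}
    (hx : x ∈ openSegment ℝ (-1) 0) (hxz : x = z * (x + 1)) : z.im = 0 ∧ z.re < 0 := by
  obtain ⟨θ, ⟨hθ0, hθ1⟩, hθx⟩ := (openSegment_eq_image ℝ _ _).subset hx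
  have hxθ : x = (θ - 1 : ℝ) := by
    rw [← hθx]
    simp only [Complex.real_smul, smul_zero, add_zero]
    push_cast
    ring
  have hzθ : z = ((θ - 1) / θ : ℝ) := by
    rw [hxθ] at hxz
    push_cast at hxz ⊢
    rw [eq_div_iff (Complex.ofReal_ne_zero.mpr hθ0.ne'), hxz]
    ring
  rw [hzθ, Complex.ofReal_im, Complex.ofReal_re]
  exact ⟨rfl, div_neg_of_neg_of_pos (by linarith) hθ0⟩

theorem sum_choose_mul_choose_mul_ofReal_pow_ne_zero {M m : ℕ} (hm : m ≤ M) (K : ℕ) {t : ℝ}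
    (ht : 0 ≤ t) :
    ∑ d ∈ range (m + 1), ((K.choose d : ℂ) * (M.choose (m - d) : ℂ)) * (t : ℂ) ^ d ≠ 0 := by
  have hpos : 0 < ∑ d ∈ range (m + 1), (K.choose d : ℝ) * M.choose (m - d) * t ^ d :=
    Finset.sum_pos' (fun _ _ => by positivity) ⟨0, by simp, by simpa using Nat.choose_pos hm⟩
  exact_mod_cast hpos.ne'

theorem hypergeometric_pgf_neg_roots_general (N K m : ℕ) (hm : m ≤ N - K) (z : ℂ)
    (hz : ∑ d ∈ Finset.range (m + 1),
        ((Nat.choose K d : ℂ) * (Nat.choose (N - K) (m - d) : ℂ)) * z ^ d = 0) :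
    z.im = 0 ∧ z.re < 0 := by
  generalize N - K = M at hm hz
  have hz0 : z ≠ 0 := by
    rintro rfl
    exact sum_choose_mul_choose_mul_ofReal_pow_ne_zero hm K le_rfl (by simpa using hz)
  have hz1 : z ≠ 1 := by
    rintro rfl
    exact sum_choose_mul_choose_mul_ofReal_pow_ne_zero hm K zero_le_one (by simpa using hz)
  obtain ⟨x, hx⟩ : ∃ x : ℂ, x = z * (x + 1) :=
    ⟨z / (1 - z), by field_simp [sub_ne_zero.mpr hz1.symm]; ring⟩
  have hdeg : ((X : ℂ[X]) ^ M * (X + 1) ^ K).natDegree = M + K := by compute_degree!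
  have hP : derivative^[m] ((X : ℂ[X]) ^ M * (X + 1) ^ K) ≠ 0 :=
    iterate_derivative_ne_zero (mul_ne_zero (pow_ne_zero _ X_ne_zero)
      (pow_ne_zero _ (by simpa using X_add_C_ne_zero (1 : ℂ)))) (by rw [hdeg]; omega)
  have hroot : x ∈ (derivative^[m] ((X : ℂ[X]) ^ M * (X + 1) ^ K)).rootSet ℂ := by
    rw [mem_rootSet, coe_aeval_eq_eval,
      eval_iterate_derivative_X_pow_mul_X_add_one_pow hm K hx, hz, mul_zero]
    exact ⟨hP, rfl⟩
  have hx1 : x ≠ -1 := by rintro rfl; simp at hx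
  have hx0 : x ≠ 0 := by rintro rfl; exact hz0 (by simpa using hx.symm)
  refine Complex.im_eq_zero_and_re_neg_of_mem_openSegment
    (mem_openSegment_of_ne_left_right hx1.symm hx0.symm ?_) hx
  rw [← convexHull_pair]
  exact convexHull_mono (rootSet_X_pow_mul_X_add_one_pow_subset M K)
    (rootSet_iterate_derivative_subset_convexHull_rootSet _ m hroot)

/-- For `0 < K < N`, `0 < m ≤ N - K`, every complex root of the
hypergeometric probability generating function (times `C(N,m)`) is a strictly
negative real number. -/
theorem hypergeometric_pgf_neg_roots (N K m : ℕ) (hK0 : 0 < K) (hKN : K < N)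
    (hm0 : 0 < m) (hm : m ≤ N - K) (z : ℂ)
    (hz : ∑ d ∈ Finset.range (m + 1),
        ((Nat.choose K d : ℂ) * (Nat.choose (N - K) (m - d) : ℂ)) * z ^ d = 0) :
    z.im = 0 ∧ z.re < 0 :=
  hypergeometric_pgf_neg_roots_general N K m hm z hz
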